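/- Let (A, R) be a finite SETAF where every argument has at least one attacker set. A function ℓ : A → {0, ½, 1} is a complete labelling if and only if for every argument a: ℓ(a) equals 1 minus the maximum over attacker sets S of a of the minimum over b ∈ S of ℓ(b), when all values involved lie in {0, ½, 1}. -/

import Mathlib

/-!
Write `m S` for the minimum of `ℓ` over `S` (with `m ∅ = 1`) and `M a` for the maximum of `m` over
the attacker sets of `a` (with `0` for no attacker). Since `0 ≤ ℓ ≤ 1`, `m S = 1` says that all of `S`
is labelled `1` and `m S = 0` that some member of `S` is labelled `0`; dually `M a = 0` says that every
attacker set contains a `0` and `M a = 1` that some attacker set is entirely labelled `1`. So the two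
clauses of completeness read `ℓ a = 1 ↔ M a = 0` and `ℓ a = 0 ↔ M a = 1`, and since a minimum or
maximum of values in `{0, ½, 1}` lies again in `{0, ½, 1}`, for such values this pair of equivalences
is the same as `ℓ a = 1 - M a`.
-/

open Set Finset

/-- The attacker sets of argument `a` in the SETAF with attack relation `R`. -/
def attackers {A : Type*} [DecidableEq A] (R : Finset (Finset A × A)) (a : A) :
    Finset (Finset A) :=
  (R.filter fun p => p.2 = a).image Prod.fst

namespace Finset

variable {α β : Type*} {s : Finset α} {f : α → β}

theorem fold_mem_of_choice {op : β → β → β} [Std.Commutative op] [Std.Associative op]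
    (hop : ∀ x y, op x y = x ∨ op x y = y) {T : Set β} {b : β} (hb : b ∈ T)
    (hf : ∀ x ∈ s, f x ∈ T) : s.fold op b f ∈ T := by
  induction s using Finset.cons_induction with
  | empty => simpa using hb
  | cons a s ha ih =>
    rw [fold_cons]
    rcases hop (f a) (s.fold op b f) with h | h <;> rw [h]
    · exact hf a (mem_cons_self a s)
    · exact ih fun x hx => hf x (mem_cons_of_mem hx)

variable [LinearOrder β] {lo hi : β}

theorem fold_min_eq_init_iff (hf : ∀ x ∈ s, f x ≤ hi) :
    s.fold min hi f = hi ↔ ∀ x ∈ s, f x = hi := by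
  rw [le_antisymm_iff, and_iff_right ((fold_min_le hi).2 (Or.inl le_rfl)), le_fold_min]
  simp only [le_refl, true_and]
  exact forall₂_congr fun x hx => ⟨(hf x hx).antisymm, ge_of_eq⟩

theorem fold_max_eq_init_iff (hf : ∀ x ∈ s, lo ≤ f x) :
    s.fold max lo f = lo ↔ ∀ x ∈ s, f x = lo :=
  fold_min_eq_init_iff (β := βᵒᵈ) hf

theorem fold_min_eq_iff_exists (hlt : lo < hi) (hf : ∀ x ∈ s, lo ≤ f x) :
    s.fold min hi f = lo ↔ ∃ x ∈ s, f x = lo := by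
  have hlo : lo ≤ s.fold min hi f := (le_fold_min lo).2 ⟨hlt.le, hf⟩
  rw [← hlo.ge_iff_eq', fold_min_le, or_iff_right hlt.not_ge]
  exact exists_congr fun x => and_congr_right fun hx => (hf x hx).ge_iff_eq'

theorem fold_max_eq_iff_exists (hlt : lo < hi) (hf : ∀ x ∈ s, f x ≤ hi) :
    s.fold max lo f = hi ↔ ∃ x ∈ s, f x = hi :=
  fold_min_eq_iff_exists (β := βᵒᵈ) hlt hf

end Finset

theorem eq_one_sub_iff_of_mem_three {x y : ℝ} (hx : x ∈ ({0, 1/2, 1} : Set ℝ))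
    (hy : y ∈ ({0, 1/2, 1} : Set ℝ)) :
    ((x = 1 ↔ y = 0) ∧ (x = 0 ↔ y = 1)) ↔ x = 1 - y := by
  simp only [Set.mem_insert_iff, Set.mem_singleton_iff] at hx hy
  rcases hx with rfl | rfl | rfl <;> rcases hy with rfl | rfl | rfl <;> norm_num

theorem stmt_19_general {A : Type*} [DecidableEq A]
    (R : Finset (Finset A × A))
    (ℓ : A → ℝ) (hℓ : ∀ a, ℓ a = 0 ∨ ℓ a = 1/2 ∨ ℓ a = 1) :
    ((∀ a, (ℓ a = 1 ↔ ∀ S ∈ attackers R a, ∃ b ∈ S, ℓ b = 0) ∧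
           (ℓ a = 0 ↔ ∃ S ∈ attackers R a, ∀ b ∈ S, ℓ b = 1)) ↔
      (∀ a, ℓ a = 1 - (attackers R a).fold max 0 (fun S => S.fold min 1 ℓ))) := by
  set T : Set ℝ := {0, 1/2, 1}
  have hℓT : ∀ b, ℓ b ∈ T := hℓ
  have hT_bounds : ∀ x ∈ T, 0 ≤ x ∧ x ≤ 1 := by
    rintro x (rfl | rfl | rfl) <;> norm_num
  have hmin_T : ∀ S : Finset A, S.fold min 1 ℓ ∈ T := fun S =>
    fold_mem_of_choice min_choice (by simp [T]) fun b _ => hℓT b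
  have hmax_T : ∀ a, (attackers R a).fold max 0 (fun S => S.fold min 1 ℓ) ∈ T := fun a =>
    fold_mem_of_choice max_choice (by simp [T]) fun S _ => hmin_T S
  refine forall_congr' fun a => ?_
  rw [← eq_one_sub_iff_of_mem_three (hℓT a) (hmax_T a),
    fold_max_eq_init_iff fun S _ => (hT_bounds _ (hmin_T S)).1,
    fold_max_eq_iff_exists one_pos fun S _ => (hT_bounds _ (hmin_T S)).2]
  simp only [fold_min_eq_iff_exists one_pos fun b _ => (hT_bounds _ (hℓT b)).1,
    fold_min_eq_init_iff fun b _ => (hT_bounds _ (hℓT b)).2]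

/-- For a finite SETAF where every argument has at least one attacker set
and `ℓ : A → {0, 1/2, 1}`, `ℓ` is a complete labelling iff for every `a`,
`ℓ a = 1 - max over attacker sets S of a of (min over b ∈ S of ℓ b)`. -/
theorem stmt_19 {A : Type*} [Fintype A] [DecidableEq A]
    (R : Finset (Finset A × A)) (hR : ∀ p ∈ R, p.1.Nonempty)
    (hatt : ∀ a, (attackers R a).Nonempty)
    (ℓ : A → ℝ) (hℓ : ∀ a, ℓ a = 0 ∨ ℓ a = 1/2 ∨ ℓ a = 1) :
    ((∀ a, (ℓ a = 1 ↔ ∀ S ∈ attackers R a, ∃ b ∈ S, ℓ b = 0) ∧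
           (ℓ a = 0 ↔ ∃ S ∈ attackers R a, ∀ b ∈ S, ℓ b = 1)) ↔
      (∀ a, ℓ a = 1 - (attackers R a).fold max 0 (fun S => S.fold min 1 ℓ))) :=
  stmt_19_general R ℓ hℓ
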